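/- arXiv:1302.1980 — 2 statements merged into one kernel-verified Lean document; each statement's English description precedes it below -/
import Mathlib

section
/- Let $t_0 \geq 0$, $h > 0$, $\beta > 0$, $0 < \alpha < 1$. Then for every $t \geq t_0$, $\frac{1}{\Gamma(\alpha)}\int_{t_0}^{t}(t-s)^{\alpha-1}e^{-\beta(t-s)}\,ds \leq \frac{(t_0+h)^{\alpha-1}e^{-\beta(t_0+h)}}{\beta\,\Gamma(\alpha)} + \frac{(t_0+h)^{\alpha}}{\Gamma(\alpha+1)}$. -/
/-!
After the substitution `u = t - s` the integral becomes `∫₀^{t-t₀} u^(α-1) e^(-βu) du`. With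
`A = t₀ + h`, extend the range to `[0, max (t - t₀) A]` (the integrand is nonnegative) and split
at `A`: on `[0, A]` drop the exponential, giving `A^α / α`; on `[A, ∞)` bound `u^(α-1) ≤ A^(α-1)`
(as `α ≤ 1`), giving `A^(α-1) e^(-βA) / β`. Finally `α Γ(α) = Γ(α + 1)`.
-/

open Real MeasureTheory intervalIntegral

lemma intervalIntegrable_rpow_mul_exp {r : ℝ} (hr : -1 < r) (β a b : ℝ) :
    IntervalIntegrable (fun u => u ^ r * exp (-β * u)) volume a b :=
  (intervalIntegrable_rpow' hr).mul_continuousOn (by fun_prop)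

lemma integral_exp_neg_mul {β : ℝ} (hβ : β ≠ 0) (a b : ℝ) :
    ∫ u in a..b, exp (-β * u) = (exp (-β * a) - exp (-β * b)) / β := by
  rw [integral_comp_mul_left (fun u => exp u) (neg_ne_zero.2 hβ), integral_exp, smul_eq_mul]
  field_simp
  ring

lemma integral_rpow_mul_exp_le_integral_rpow {r β a b : ℝ} (hr : -1 < r) (hβ : 0 ≤ β)
    (ha : 0 ≤ a) (hab : a ≤ b) :
    ∫ u in a..b, u ^ r * exp (-β * u) ≤ ∫ u in a..b, u ^ r :=
  integral_mono_on hab (intervalIntegrable_rpow_mul_exp hr β a b) (intervalIntegrable_rpow' hr)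
    fun u hu => mul_le_of_le_one_right (rpow_nonneg (ha.trans hu.1) r)
      (exp_le_one_iff.2 (by nlinarith [ha.trans hu.1]))

lemma integral_rpow_mul_exp_le_of_nonpos {r β A M : ℝ} (hr : r ≤ 0) (hβ : 0 < β) (hA : 0 < A)
    (hAM : A ≤ M) :
    ∫ u in A..M, u ^ r * exp (-β * u) ≤ A ^ r * exp (-β * A) / β := by
  have hint : IntervalIntegrable (fun u => u ^ r * exp (-β * u)) volume A M := by
    refine ContinuousOn.intervalIntegrable (ContinuousOn.mul ?_ (by fun_prop))
    exact continuousOn_id.rpow_const fun u hu =>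
      Or.inl (hA.trans_le (Set.uIcc_of_le hAM ▸ hu).1).ne'
  calc ∫ u in A..M, u ^ r * exp (-β * u)
      ≤ ∫ u in A..M, A ^ r * exp (-β * u) :=
        integral_mono_on hAM hint
          ((by fun_prop : Continuous fun u => A ^ r * exp (-β * u)).intervalIntegrable _ _)
          fun u hu => mul_le_mul_of_nonneg_right (rpow_le_rpow_of_nonpos hA hu.1 hr)
            (exp_pos _).le
    _ = A ^ r * ((exp (-β * A) - exp (-β * M)) / β) := by
        rw [intervalIntegral.integral_const_mul, integral_exp_neg_mul hβ.ne']
    _ ≤ A ^ r * (exp (-β * A) / β) := by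
        gcongr
        linarith [exp_pos (-β * M)]
    _ = A ^ r * exp (-β * A) / β := mul_div_assoc' ..

lemma integral_rpow_mul_exp_le {α β A T : ℝ} (hα0 : 0 < α) (hα1 : α ≤ 1) (hβ : 0 < β)
    (hA : 0 < A) (hT : 0 ≤ T) :
    ∫ u in 0..T, u ^ (α - 1) * exp (-β * u) ≤ A ^ (α - 1) * exp (-β * A) / β + A ^ α / α := by
  have hr : -1 < α - 1 := by linarith
  set M := max T A
  have hinit : ∫ u in 0..A, u ^ (α - 1) * exp (-β * u) ≤ A ^ α / α := by
    calc ∫ u in 0..A, u ^ (α - 1) * exp (-β * u) ≤ ∫ u in 0..A, u ^ (α - 1) :=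
          integral_rpow_mul_exp_le_integral_rpow hr hβ.le le_rfl hA.le
      _ = A ^ α / α := by
          rw [integral_rpow (Or.inl hr), sub_add_cancel, zero_rpow hα0.ne', sub_zero]
  calc ∫ u in 0..T, u ^ (α - 1) * exp (-β * u)
      ≤ ∫ u in 0..M, u ^ (α - 1) * exp (-β * u) :=
        integral_mono_interval le_rfl hT (le_max_left T A)
          ((ae_restrict_iff' measurableSet_Ioc).2 (Filter.Eventually.of_forall
            fun u hu => mul_nonneg (rpow_nonneg hu.1.le _) (exp_pos _).le))
          (intervalIntegrable_rpow_mul_exp hr β 0 M)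
    _ = (∫ u in 0..A, u ^ (α - 1) * exp (-β * u)) + ∫ u in A..M, u ^ (α - 1) * exp (-β * u) :=
        (integral_add_adjacent_intervals (intervalIntegrable_rpow_mul_exp hr β 0 A)
          (intervalIntegrable_rpow_mul_exp hr β A M)).symm
    _ ≤ A ^ α / α + A ^ (α - 1) * exp (-β * A) / β :=
        add_le_add hinit
          (integral_rpow_mul_exp_le_of_nonpos (by linarith) hβ hA (le_max_right T A))
    _ = _ := add_comm ..

theorem stmt_1 (t0 h β α : ℝ) (ht0 : 0 ≤ t0) (hh : 0 < h) (hβ : 0 < β)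
    (hα0 : 0 < α) (hα1 : α < 1) (t : ℝ) (ht : t0 ≤ t) :
    (1 / Real.Gamma α) * ∫ s in t0..t, (t - s) ^ (α - 1) * Real.exp (-β * (t - s)) ≤
      (t0 + h) ^ (α - 1) * Real.exp (-β * (t0 + h)) / (β * Real.Gamma α) +
      (t0 + h) ^ α / Real.Gamma (α + 1) := by
  have hΓ : 0 < Gamma α := Gamma_pos_of_pos hα0
  have hsubst : ∫ s in t0..t, (t - s) ^ (α - 1) * exp (-β * (t - s)) =
      ∫ u in 0..t - t0, u ^ (α - 1) * exp (-β * u) := by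
    rw [integral_comp_sub_left (fun u => u ^ (α - 1) * exp (-β * u)), sub_self]
  have hbound := integral_rpow_mul_exp_le hα0 hα1.le hβ (by positivity : 0 < t0 + h)
    (sub_nonneg.2 ht)
  rw [hsubst, Gamma_add_one hα0.ne']
  calc 1 / Gamma α * ∫ u in 0..t - t0, u ^ (α - 1) * exp (-β * u)
      ≤ 1 / Gamma α * ((t0 + h) ^ (α - 1) * exp (-β * (t0 + h)) / β + (t0 + h) ^ α / α) :=
        mul_le_mul_of_nonneg_left hbound (by positivity)
    _ = _ := by field_simp
end

section
/- Let $0 < \alpha < 1$, $\beta > 0$, $t_0 \geq 0$, and let $k : [t_0, \infty) \to [0,\infty)$ be continuous and bounded with $\lim_{s\to\infty} k(s) = 0$. Then $\lim_{t \to \infty} \int_{t_0}^{t} (t-s)^{\alpha - 1} e^{-\beta(t-s)} k(s)\,ds = 0$. -/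
open Real Filter MeasureTheory intervalIntegral Set

lemma aux_int {α β : ℝ} (hα0 : 0 < α) (hβ : 0 < β) :
    IntegrableOn (fun u : ℝ => u ^ (α - 1) * Real.exp (-β * u)) (Ioi 0) := by
  have hg := Real.GammaIntegral_convergent hα0
  have h1 : IntegrableOn (fun x : ℝ => Real.exp (-(β * x)) * (β * x) ^ (α - 1)) (Ioi 0) := by
    have := (integrableOn_Ioi_comp_mul_left_iff
      (fun x : ℝ => Real.exp (-x) * x ^ (α - 1)) 0 hβ).mpr (by simpa using hg)
    simpa using this
  have h2 := h1.const_mul (β ^ (1 - α))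
  refine IntegrableOn.congr_fun h2 (fun x hx => ?_) measurableSet_Ioi
  have hx0 : (0:ℝ) < x := hx
  rw [Real.mul_rpow hβ.le hx0.le, ← mul_assoc, ← mul_assoc]
  rw [mul_comm (β ^ (1-α)) (Real.exp (-(β*x)))]
  rw [mul_assoc (Real.exp (-(β*x))), ← Real.rpow_add hβ]
  ring_nf
  simp [Real.rpow_zero]

theorem stmt_5 (α β t0 : ℝ) (hα0 : 0 < α) (hα1 : α < 1) (hβ : 0 < β)
    (ht0 : 0 ≤ t0) (k : ℝ → ℝ)
    (hk_cont : ContinuousOn k (Ici t0))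
    (hk_nonneg : ∀ s ∈ Ici t0, 0 ≤ k s)
    (hk_bdd : ∃ M, ∀ s ∈ Ici t0, k s ≤ M)
    (hk_lim : Filter.Tendsto k Filter.atTop (nhds 0)) :
    Filter.Tendsto
      (fun t : ℝ => ∫ s in t0..t, (t - s) ^ (α - 1) * Real.exp (-β * (t - s)) * k s)
      Filter.atTop (nhds 0) := by
  set f : ℝ → ℝ := fun u => u ^ (α - 1) * Real.exp (-β * u) with hf_def
  have hf_int : IntegrableOn f (Ioi 0) := aux_int hα0 hβ
  have hf_nonneg : ∀ u : ℝ, 0 ≤ u → 0 ≤ f u := fun u hu =>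
    mul_nonneg (Real.rpow_nonneg hu _) (Real.exp_pos _).le
  set C : ℝ := ∫ u in Ioi 0, f u with hC_def
  have hC_nonneg : 0 ≤ C :=
    setIntegral_nonneg measurableSet_Ioi (fun u hu => hf_nonneg u (le_of_lt hu))
  obtain ⟨M₀, hM₀⟩ := hk_bdd
  set M : ℝ := max M₀ 0 with hM_def
  have hM_nonneg : 0 ≤ M := le_max_right _ _
  have hM : ∀ s ∈ Ici t0, k s ≤ M := fun s hs => (hM₀ s hs).trans (le_max_left _ _)
  rw [Metric.tendsto_atTop]
  intro ε hε
  -- choose ε'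
  have hC1 : (0:ℝ) < C + 1 := by linarith
  set ε' : ℝ := ε / (2 * (C + 1)) with hε'_def
  have hε' : 0 < ε' := by positivity
  obtain ⟨T₁, hT₁⟩ := (Metric.tendsto_atTop.mp hk_lim) ε' hε'
  set T : ℝ := max T₁ t0 with hT_def
  have hTt0 : t0 ≤ T := le_max_right _ _
  have hkT : ∀ s, T ≤ s → k s ≤ ε' := by
    intro s hs
    have := hT₁ s ((le_max_left _ _).trans hs)
    rw [Real.dist_eq, sub_zero] at this
    exact (le_abs_self _).trans this.le
  -- choose δ for the front part
  set a : ℝ := (T - t0) * M with ha_def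
  have ha_nonneg : 0 ≤ a := mul_nonneg (by linarith) hM_nonneg
  set δ : ℝ := ε / (2 * (a + 1)) with hδ_def
  have hδ : 0 < δ := by positivity
  set N : ℝ := max (T + 1) (T - Real.log δ / β) with hN_def
  refine ⟨N, fun t ht => ?_⟩
  have htT1 : T + 1 ≤ t := (le_max_left _ _).trans ht
  have htT : T ≤ t := by linarith
  have ht0t : t0 ≤ t := hTt0.trans htT
  have hexpδ : Real.exp (-β * (t - T)) ≤ δ := by
    have h1 : T - Real.log δ / β ≤ t := (le_max_right _ _).trans ht
    have h2 : -β * (t - T) ≤ Real.log δ := by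
      have h3 : -(Real.log δ) / β ≤ t - T := by rw [neg_div]; linarith
      rw [div_le_iff₀ hβ] at h3
      nlinarith
    calc Real.exp (-β * (t - T)) ≤ Real.exp (Real.log δ) := Real.exp_le_exp.mpr h2
      _ = δ := Real.exp_log hδ
  -- integrability pieces
  have hBint : IntervalIntegrable (fun s => f (t - s)) volume T t := by
    have h1 : IntervalIntegrable f volume 0 (t - T) := by
      rw [intervalIntegrable_iff_integrableOn_Ioc_of_le (by linarith)]
      exact hf_int.mono_set Ioc_subset_Ioi_self
    have := h1.comp_sub_left t
    simpa using this.symm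
  have hk_contTt : ContinuousOn k (uIcc T t) := by
    refine hk_cont.mono ?_
    rw [uIcc_of_le htT]
    exact fun x hx => hTt0.trans hx.1
  have hBkint : IntervalIntegrable (fun s => f (t - s) * k s) volume T t :=
    hBint.mul_continuousOn hk_contTt
  have hAint : IntervalIntegrable (fun s => f (t - s) * k s) volume t0 T := by
    apply ContinuousOn.intervalIntegrable
    rw [uIcc_of_le hTt0]
    have hsub : Icc t0 T ⊆ Ici t0 := fun x hx => hx.1
    refine ContinuousOn.mul (ContinuousOn.mul ?_ ?_) (hk_cont.mono hsub)
    · apply ContinuousOn.rpow_const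
      · exact (continuous_const.sub continuous_id).continuousOn
      · intro x hx
        left
        have : x ≤ T := hx.2
        intro h
        have : t - x ≥ 1 := by linarith
        linarith [h ▸ this]
    · exact (Real.continuous_exp.comp (continuous_const.mul
        (continuous_const.sub continuous_id))).continuousOn
  -- rewrite integrand
  have hEq : ∀ s, (t - s) ^ (α - 1) * Real.exp (-β * (t - s)) * k s = f (t - s) * k s :=
    fun s => rfl
  simp only [hEq]
  -- split the integral
  have hsplit : (∫ s in t0..t, f (t - s) * k s)
      = (∫ s in t0..T, f (t - s) * k s) + ∫ s in T..t, f (t - s) * k s :=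
    (integral_add_adjacent_intervals hAint hBkint).symm
  -- nonnegativity
  have hnonneg_int : ∀ s, t0 ≤ s → s ≤ t → 0 ≤ f (t - s) * k s := fun s hs hst =>
    mul_nonneg (hf_nonneg _ (by linarith)) (hk_nonneg s hs)
  have hI_nonneg : 0 ≤ ∫ s in t0..t, f (t - s) * k s := by
    rw [hsplit]
    have h1 : 0 ≤ ∫ s in t0..T, f (t - s) * k s :=
      intervalIntegral.integral_nonneg hTt0 (fun s hs => hnonneg_int s hs.1 (by linarith [hs.2]))
    have h2 : 0 ≤ ∫ s in T..t, f (t - s) * k s :=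
      intervalIntegral.integral_nonneg htT (fun s hs => hnonneg_int s (hTt0.trans hs.1) hs.2)
    linarith
  -- front bound
  have hfront : (∫ s in t0..T, f (t - s) * k s) ≤ (T - t0) * (δ * M) := by
    have hb : ∀ s ∈ Icc t0 T, f (t - s) * k s ≤ δ * M := by
      intro s hs
      have hts1 : 1 ≤ t - s := by linarith [hs.2]
      have hf_le : f (t - s) ≤ δ := by
        have h1 : (t - s) ^ (α - 1) ≤ 1 :=
          Real.rpow_le_one_of_one_le_of_nonpos hts1 (by linarith)
        have h2 : Real.exp (-β * (t - s)) ≤ Real.exp (-β * (t - T)) := by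
          apply Real.exp_le_exp.mpr
          nlinarith [hs.2]
        calc f (t - s) ≤ 1 * Real.exp (-β * (t - s)) := by
              exact mul_le_mul_of_nonneg_right h1 (Real.exp_pos _).le
          _ = Real.exp (-β * (t - s)) := one_mul _
          _ ≤ Real.exp (-β * (t - T)) := h2
          _ ≤ δ := hexpδ
      calc f (t - s) * k s ≤ δ * k s :=
            mul_le_mul_of_nonneg_right hf_le (hk_nonneg s hs.1)
        _ ≤ δ * M := mul_le_mul_of_nonneg_left (hM s hs.1) hδ.le
    calc (∫ s in t0..T, f (t - s) * k s) ≤ ∫ _s in t0..T, δ * M := by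
          apply intervalIntegral.integral_mono_on hTt0 hAint intervalIntegrable_const
          exact hb
      _ = (T - t0) * (δ * M) := by simp [intervalIntegral.integral_const, smul_eq_mul]; ring
  -- tail bound
  have htail : (∫ s in T..t, f (t - s) * k s) ≤ ε' * C := by
    have hb : ∀ s ∈ Icc T t, f (t - s) * k s ≤ ε' * f (t - s) := by
      intro s hs
      rw [mul_comm ε' _]
      exact mul_le_mul_of_nonneg_left (hkT s hs.1) (hf_nonneg _ (by linarith [hs.2]))
    have step1 : (∫ s in T..t, f (t - s) * k s) ≤ ∫ s in T..t, ε' * f (t - s) :=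
      intervalIntegral.integral_mono_on htT hBkint (hBint.const_mul ε') hb
    have step2 : (∫ s in T..t, ε' * f (t - s)) = ε' * ∫ s in T..t, f (t - s) :=
      intervalIntegral.integral_const_mul _ _
    have step3 : (∫ s in T..t, f (t - s)) = ∫ u in (0:ℝ)..(t - T), f u := by
      rw [intervalIntegral.integral_comp_sub_left f t]
      norm_num
    have step4 : (∫ u in (0:ℝ)..(t - T), f u) ≤ C := by
      rw [intervalIntegral.integral_of_le (by linarith : (0:ℝ) ≤ t - T)]
      refine setIntegral_mono_set hf_int ?_ ?_
      · exact ae_restrict_of_forall_mem measurableSet_Ioi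
          (fun u hu => hf_nonneg u (le_of_lt hu))
      · exact HasSubset.Subset.eventuallyLE Ioc_subset_Ioi_self
    calc (∫ s in T..t, f (t - s) * k s) ≤ ε' * ∫ s in T..t, f (t - s) := by
          rw [← step2]; exact step1
      _ = ε' * ∫ u in (0:ℝ)..(t - T), f u := by rw [step3]
      _ ≤ ε' * C := mul_le_mul_of_nonneg_left step4 hε'.le
  -- combine
  rw [Real.dist_eq, sub_zero, abs_of_nonneg hI_nonneg, hsplit]
  have h1 : (T - t0) * (δ * M) < ε / 2 := by
    have : (T - t0) * (δ * M) = a * δ := by ring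
    rw [this, hδ_def]
    rw [div_eq_mul_inv]
    have h2 : a * (ε * (2 * (a + 1))⁻¹) = ε / 2 * (a / (a + 1)) := by
      field_simp
    rw [h2]
    have h3 : a / (a + 1) < 1 := by
      rw [div_lt_one (by linarith)]
      linarith
    nlinarith
  have h2 : ε' * C ≤ ε / 2 := by
    have : ε' * (C + 1) = ε / 2 := by
      rw [hε'_def]
      field_simp
    nlinarith
  linarith
end
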